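/- (Cut-elimination for SELLS) Every sequent provable in the sequent calculus SELLS_Σ with the cut rule is provable in SELLS_Σ without the cut rule. -/

import Mathlib

/-- A c-semiring `⟨A, +, ×, ⊥, ⊤⟩`: `+` is commutative, associative and idempotent
with unit `⊥` and absorbing element `⊤`; `×` is commutative and associative with
unit `⊤` and absorbing element `⊥`; and `×` distributes over `+`. -/
structure CSemiring (A : Type*) where
  add : A → A → A
  mul : A → A → A
  bot : A
  top : A
  add_comm : ∀ a b, add a b = add b a
  add_assoc : ∀ a b c, add (add a b) c = add a (add b c)
  add_idem : ∀ a, add a a = a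
  add_unit : ∀ a, add a bot = a
  add_absorb : ∀ a, add a top = top
  mul_comm : ∀ a b, mul a b = mul b a
  mul_assoc : ∀ a b c, mul (mul a b) c = mul a (mul b c)
  mul_unit : ∀ a, mul a top = a
  mul_absorb : ∀ a, mul a bot = bot
  mul_add : ∀ a b c, mul a (add b c) = add (mul a b) (mul a c)

/-- The order induced by `+`: `a ≤ b` iff `a + b = b`. -/
def CSemiring.le {A : Type*} (S : CSemiring A) (a b : A) : Prop := S.add a b = b

/-- Product `a₁ × ⋯ × aₙ` of a list of c-semiring elements (`⊤` for the empty list). -/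
def CSemiring.prod {A : Type*} (S : CSemiring A) (l : List A) : A :=
  l.foldr S.mul S.top

/-- First-order terms over an arity-indexed family `Fn` of function symbols,
with de Bruijn variables. -/
inductive STerm (Fn : ℕ → Type) : Type
  | var : ℕ → STerm Fn
  | func : {n : ℕ} → Fn n → (Fin n → STerm Fn) → STerm Fn

/-- Shift up by one the variables `≥ k`. -/
def STerm.lift {Fn : ℕ → Type} (k : ℕ) : STerm Fn → STerm Fn
  | .var n => .var (if n < k then n else n + 1)
  | .func f ts => .func f (fun i => (ts i).lift k)

/-- Substitute the term `s` for the variable `k` (shifting down variables `> k`). -/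
def STerm.subst {Fn : ℕ → Type} (k : ℕ) (s : STerm Fn) : STerm Fn → STerm Fn
  | .var n => if n < k then .var n else if n = k then s else .var (n - 1)
  | .func f ts => .func f (fun i => STerm.subst k s (ts i))

/-- Formulas of SELLS over subexponential labels `A`, function symbols `Fn`
and predicate symbols `Pr`. Quantifiers bind de Bruijn variable `0`. -/
inductive SFormula (A : Type) (Fn Pr : ℕ → Type) : Type
  | atom : {n : ℕ} → Pr n → (Fin n → STerm Fn) → SFormula A Fn Pr
  | one : SFormula A Fn Pr
  | top : SFormula A Fn Pr
  | tensor : SFormula A Fn Pr → SFormula A Fn Pr → SFormula A Fn Pr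
  | limp : SFormula A Fn Pr → SFormula A Fn Pr → SFormula A Fn Pr
  | with_ : SFormula A Fn Pr → SFormula A Fn Pr → SFormula A Fn Pr
  | ex : SFormula A Fn Pr → SFormula A Fn Pr
  | all : SFormula A Fn Pr → SFormula A Fn Pr
  | bang : A → SFormula A Fn Pr → SFormula A Fn Pr

/-- Shift up by one the free variables `≥ k` of a formula. -/
def SFormula.lift {A : Type} {Fn Pr : ℕ → Type} (k : ℕ) :
    SFormula A Fn Pr → SFormula A Fn Pr
  | .atom p ts => .atom p (fun i => (ts i).lift k)
  | .one => .one
  | .top => .top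
  | .tensor F G => .tensor (F.lift k) (G.lift k)
  | .limp F G => .limp (F.lift k) (G.lift k)
  | .with_ F G => .with_ (F.lift k) (G.lift k)
  | .ex F => .ex (F.lift (k + 1))
  | .all F => .all (F.lift (k + 1))
  | .bang a F => .bang a (F.lift k)

/-- Capture-avoiding substitution of the term `s` for the free variable `k`. -/
def SFormula.subst {A : Type} {Fn Pr : ℕ → Type} (k : ℕ) (s : STerm Fn) :
    SFormula A Fn Pr → SFormula A Fn Pr
  | .atom p ts => .atom p (fun i => STerm.subst k s (ts i))
  | .one => .one
  | .top => .top
  | .tensor F G => .tensor (F.subst k s) (G.subst k s)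
  | .limp F G => .limp (F.subst k s) (G.subst k s)
  | .with_ F G => .with_ (F.subst k s) (G.subst k s)
  | .ex F => .ex (F.subst (k + 1) (s.lift 0))
  | .all F => .all (F.subst (k + 1) (s.lift 0))
  | .bang a F => .bang a (F.subst k s)

/-- The sequent calculus `SELLS_Σ` over the subexponential signature
`Σ = ⟨A, ≤, A⟩` induced by the c-semiring `S` (all labels are unbounded).
The boolean index tells whether the cut rule is available. -/
inductive SELLS {A : Type} (S : CSemiring A) (Fn Pr : ℕ → Type) :
    Bool → Multiset (SFormula A Fn Pr) → SFormula A Fn Pr → Prop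
  | init (cut : Bool) {n : ℕ} (p : Pr n) (ts : Fin n → STerm Fn) :
      SELLS S Fn Pr cut {.atom p ts} (.atom p ts)
  | oneR (cut : Bool) : SELLS S Fn Pr cut 0 .one
  | oneL {cut Γ G} : SELLS S Fn Pr cut Γ G → SELLS S Fn Pr cut (.one ::ₘ Γ) G
  | tensorR {cut Γ Δ F H} : SELLS S Fn Pr cut Γ F → SELLS S Fn Pr cut Δ H →
      SELLS S Fn Pr cut (Γ + Δ) (.tensor F H)
  | tensorL {cut Γ F H G} : SELLS S Fn Pr cut (F ::ₘ H ::ₘ Γ) G →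
      SELLS S Fn Pr cut (.tensor F H ::ₘ Γ) G
  | limpR {cut Γ F H} : SELLS S Fn Pr cut (F ::ₘ Γ) H →
      SELLS S Fn Pr cut Γ (.limp F H)
  | limpL {cut Γ Δ F H G} : SELLS S Fn Pr cut Γ F →
      SELLS S Fn Pr cut (H ::ₘ Δ) G →
      SELLS S Fn Pr cut (.limp F H ::ₘ (Γ + Δ)) G
  | withR {cut Γ F H} : SELLS S Fn Pr cut Γ F → SELLS S Fn Pr cut Γ H →
      SELLS S Fn Pr cut Γ (.with_ F H)
  | withL1 {cut Γ F H G} : SELLS S Fn Pr cut (F ::ₘ Γ) G →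
      SELLS S Fn Pr cut (.with_ F H ::ₘ Γ) G
  | withL2 {cut Γ F H G} : SELLS S Fn Pr cut (H ::ₘ Γ) G →
      SELLS S Fn Pr cut (.with_ F H ::ₘ Γ) G
  | topR (cut : Bool) (Γ : Multiset (SFormula A Fn Pr)) : SELLS S Fn Pr cut Γ .top
  | exR {cut Γ F} (t : STerm Fn) : SELLS S Fn Pr cut Γ (F.subst 0 t) →
      SELLS S Fn Pr cut Γ (.ex F)
  | exL {cut Γ F G} :
      SELLS S Fn Pr cut (F ::ₘ Γ.map (SFormula.lift 0)) (G.lift 0) →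
      SELLS S Fn Pr cut (.ex F ::ₘ Γ) G
  | allL {cut Γ F G} (t : STerm Fn) : SELLS S Fn Pr cut (F.subst 0 t ::ₘ Γ) G →
      SELLS S Fn Pr cut (.all F ::ₘ Γ) G
  | allR {cut Γ F} : SELLS S Fn Pr cut (Γ.map (SFormula.lift 0)) F →
      SELLS S Fn Pr cut Γ (.all F)
  | der {cut Γ a F G} : SELLS S Fn Pr cut (F ::ₘ Γ) G →
      SELLS S Fn Pr cut (.bang a F ::ₘ Γ) G
  | weak {cut Γ a F G} : SELLS S Fn Pr cut Γ G →
      SELLS S Fn Pr cut (.bang a F ::ₘ Γ) G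
  | contr {cut Γ a F G} : SELLS S Fn Pr cut (.bang a F ::ₘ .bang a F ::ₘ Γ) G →
      SELLS S Fn Pr cut (.bang a F ::ₘ Γ) G
  | prom {cut} (L : List (A × SFormula A Fn Pr)) {a F}
      (hle : S.le a (S.prod (L.map Prod.fst))) :
      SELLS S Fn Pr cut (↑(L.map (fun p => SFormula.bang p.1 p.2))) F →
      SELLS S Fn Pr cut (↑(L.map (fun p => SFormula.bang p.1 p.2))) (.bang a F)
  | cut {Γ Δ F G} : SELLS S Fn Pr true Γ F → SELLS S Fn Pr true (F ::ₘ Δ) G →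
      SELLS S Fn Pr true (Γ + Δ) G

/-!
Okada's phase-semantic argument. Contexts form a commutative monoid under multiset sum; the
closure of a set `X` of contexts consists of those `δ` for which `δ, Θ ⟶ G` is cut-free provable
whenever `γ, Θ ⟶ G` is for every `γ ∈ X`. Formulas are interpreted by closed sets ("facts"),
`!^a F` by the closure of those realizers of `F` that are contexts `!^{a₁} F₁, …, !^{aₙ} Fₙ` with
`a ≤ a₁ × ⋯ × aₙ`; monotonicity of `×` makes promotion sound, and every rule, cut included, is
sound. Conversely (Okada's lemma) each formula lies in its own interpretation, and every element
of the interpretation proves it without cut. So if `Γ ⟶ G` is provable, the context `Γ`, which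
realizes itself, realizes `G` and hence proves `G` without cut. Quantifiers are interpreted
through valuations of the variables; the eigenvariable of `∀R` and `∃L` is chosen fresh.
-/

open scoped Pointwise

namespace STerm

variable {Fn : ℕ → Type}

def bind (σ : ℕ → STerm Fn) : STerm Fn → STerm Fn
  | var n => σ n
  | func f ts => func f fun i => (ts i).bind σ

def scons (t : STerm Fn) (σ : ℕ → STerm Fn) : ℕ → STerm Fn
  | 0 => t
  | n + 1 => σ n

def up (σ : ℕ → STerm Fn) : ℕ → STerm Fn :=
  scons (var 0) fun n => (σ n).lift 0

def bound : STerm Fn → ℕ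
  | var n => n + 1
  | func _ ts => Finset.univ.sup fun i => (ts i).bound

/-- Turns a fresh variable `x` into the eigenvariable `0`. -/
def freshen (x : ℕ) : ℕ → STerm Fn := fun n => if n = x then var 0 else var (n + 1)

@[simp]
theorem var_lift_zero (n : ℕ) : (var n : STerm Fn).lift 0 = var (n + 1) := by
  simp [lift]

theorem bind_var (t : STerm Fn) : t.bind var = t := by
  induction t with
  | var n => rfl
  | func f ts ih => simp only [bind, ih]

theorem bind_bind (θ τ : ℕ → STerm Fn) (t : STerm Fn) :
    (t.bind τ).bind θ = t.bind fun n => (τ n).bind θ := by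
  induction t with
  | var n => rfl
  | func f ts ih => simp only [bind, ih]

theorem lift_eq_bind (k : ℕ) (t : STerm Fn) : t.lift k = t.bind fun n => (var n).lift k := by
  induction t with
  | var n => rfl
  | func f ts ih => simp only [lift, bind, ih]

theorem subst_eq_bind (k : ℕ) (s t : STerm Fn) :
    subst k s t = t.bind fun n => subst k s (var n) := by
  induction t with
  | var n => rfl
  | func f ts ih => simp only [subst, bind, ih]

theorem bind_congr {θ τ : ℕ → STerm Fn} (t : STerm Fn) (h : ∀ n < t.bound, θ n = τ n) :
    t.bind θ = t.bind τ := by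
  induction t with
  | var n => exact h n (Nat.lt_succ_self n)
  | func f ts ih =>
    simp only [bind]
    congr 1
    funext i
    exact ih i fun n hn => h n (hn.trans_le (Finset.le_sup (f := fun i => (ts i).bound)
      (Finset.mem_univ i)))

theorem lift_zero_bind_scons (u t : STerm Fn) (σ : ℕ → STerm Fn) :
    (u.lift 0).bind (scons t σ) = u.bind σ := by
  rw [lift_eq_bind, bind_bind]
  simp [bind, scons]

theorem lift_zero_bind_up (t : STerm Fn) (θ : ℕ → STerm Fn) :
    (t.lift 0).bind (up θ) = (t.bind θ).lift 0 := by
  rw [up, lift_zero_bind_scons, lift_eq_bind 0 (t.bind θ), bind_bind]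
  simp only [← lift_eq_bind]

theorem up_var : up (var : ℕ → STerm Fn) = var := by
  funext n
  cases n <;> simp [up, scons]

theorem up_bind_up (θ τ : ℕ → STerm Fn) :
    (fun n => (up τ n).bind (up θ)) = up fun n => (τ n).bind θ := by
  funext n
  cases n with
  | zero => rfl
  | succ n => exact lift_zero_bind_up (τ n) θ

theorem up_bind_scons (θ σ : ℕ → STerm Fn) (t : STerm Fn) :
    (fun n => (up θ n).bind (scons t σ)) = scons t fun n => (θ n).bind σ := by
  funext n
  cases n with
  | zero => rfl
  | succ n => exact lift_zero_bind_scons (θ n) t σ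

theorem up_lift_var (k : ℕ) :
    up (fun n => (var n).lift k : ℕ → STerm Fn) = fun n => (var n).lift (k + 1) := by
  funext n
  cases n with
  | zero => simp [up, scons, lift]
  | succ n => by_cases h : n < k <;> simp [up, scons, lift, h]

theorem up_subst_var (k : ℕ) (s : STerm Fn) :
    up (fun n => subst k s (var n)) = fun n => subst (k + 1) (s.lift 0) (var n) := by
  funext n
  cases n with
  | zero => simp [up, scons, subst]
  | succ n =>
    rcases lt_trichotomy n k with h | rfl | h
    · simp [up, scons, subst, h]
    · simp [up, scons, subst]
    · simp [up, scons, subst, h.not_gt, h.ne']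
      omega

end STerm

namespace SFormula

variable {A : Type} {Fn Pr : ℕ → Type}

open STerm (up scons)

def bind (σ : ℕ → STerm Fn) : SFormula A Fn Pr → SFormula A Fn Pr
  | atom p ts => atom p fun i => (ts i).bind σ
  | one => one
  | top => top
  | tensor F G => tensor (F.bind σ) (G.bind σ)
  | limp F G => limp (F.bind σ) (G.bind σ)
  | with_ F G => with_ (F.bind σ) (G.bind σ)
  | ex F => ex (F.bind (up σ))
  | all F => all (F.bind (up σ))
  | bang a F => bang a (F.bind σ)

/-- Every free variable of `F` is `< F.bound`. -/
def bound : SFormula A Fn Pr → ℕ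
  | atom _ ts => Finset.univ.sup fun i => (ts i).bound
  | one => 0
  | top => 0
  | tensor F G => max F.bound G.bound
  | limp F G => max F.bound G.bound
  | with_ F G => max F.bound G.bound
  | ex F => F.bound - 1
  | all F => F.bound - 1
  | bang _ F => F.bound

theorem bind_var (F : SFormula A Fn Pr) : F.bind STerm.var = F := by
  induction F <;> simp [bind, STerm.bind_var, STerm.up_var, *]

theorem bind_bind (θ τ : ℕ → STerm Fn) (F : SFormula A Fn Pr) :
    (F.bind τ).bind θ = F.bind fun n => (τ n).bind θ := by
  induction F generalizing θ τ <;> simp [bind, STerm.bind_bind, STerm.up_bind_up, *]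

theorem lift_eq_bind (k : ℕ) (F : SFormula A Fn Pr) :
    F.lift k = F.bind fun n => (STerm.var n).lift k := by
  induction F generalizing k <;> simp [lift, bind, ← STerm.lift_eq_bind, STerm.up_lift_var, *]

theorem subst_eq_bind (k : ℕ) (s : STerm Fn) (F : SFormula A Fn Pr) :
    F.subst k s = F.bind fun n => STerm.subst k s (.var n) := by
  induction F generalizing k s <;>
    simp [subst, bind, ← STerm.subst_eq_bind, STerm.up_subst_var, *]

theorem bind_congr {θ τ : ℕ → STerm Fn} (F : SFormula A Fn Pr)
    (h : ∀ n < F.bound, θ n = τ n) : F.bind θ = F.bind τ := by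
  induction F generalizing θ τ with
  | atom p ts =>
    simp only [bind]
    congr 1
    funext i
    exact STerm.bind_congr _ fun n hn => h n (hn.trans_le (Finset.le_sup
      (f := fun i => (ts i).bound) (Finset.mem_univ i)))
  | one | top => rfl
  | tensor F G ihF ihG | limp F G ihF ihG | with_ F G ihF ihG =>
    simp only [bind, bound, lt_max_iff] at h ⊢
    rw [ihF fun n hn => h n (.inl hn), ihG fun n hn => h n (.inr hn)]
  | ex F ih | all F ih =>
    simp only [bind]
    rw [ih]
    rintro (_ | n) hn
    · rfl
    · simp only [up, scons, h n (by simp only [bound]; omega)]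
  | bang a F ih => simp only [bind, ih h]

theorem subst_zero_eq_bind (t : STerm Fn) (F : SFormula A Fn Pr) :
    F.subst 0 t = F.bind (scons t .var) := by
  rw [subst_eq_bind]
  congr 1
  funext n
  cases n <;> simp [STerm.subst, scons]

theorem subst_zero_bind_up (F : SFormula A Fn Pr) (σ : ℕ → STerm Fn) (t : STerm Fn) :
    (F.bind (up σ)).subst 0 t = F.bind (scons t σ) := by
  simp only [subst_zero_eq_bind, bind_bind, STerm.up_bind_scons, STerm.bind_var]

theorem bind_freshen {F : SFormula A Fn Pr} {x : ℕ} (hx : F.bound ≤ x) :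
    F.bind (STerm.freshen x) = F.lift 0 := by
  rw [lift_eq_bind]
  refine F.bind_congr fun n hn => ?_
  simp [STerm.freshen, (hn.trans_le hx).ne]

theorem subst_zero_var_bind_freshen {F : SFormula A Fn Pr} {x : ℕ} (hx : F.bound ≤ x) :
    (F.subst 0 (.var x)).bind (STerm.freshen x) = F := by
  rw [subst_zero_eq_bind, bind_bind]
  conv_rhs => rw [← F.bind_var]
  refine F.bind_congr fun n hn => ?_
  cases n with
  | zero => simp [scons, STerm.bind, STerm.freshen]
  | succ n =>
    simp only [scons, STerm.bind, STerm.freshen, ite_eq_right_iff]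
    omega

theorem bind_subst_zero (F : SFormula A Fn Pr) (θ : ℕ → STerm Fn) (t : STerm Fn) :
    (F.subst 0 t).bind θ = (F.bind (up θ)).subst 0 (t.bind θ) := by
  rw [subst_zero_bind_up, subst_zero_eq_bind, bind_bind]
  congr 1
  funext n
  cases n <;> rfl

theorem lift_zero_bind_up (F : SFormula A Fn Pr) (θ : ℕ → STerm Fn) :
    (F.lift 0).bind (up θ) = (F.bind θ).lift 0 := by
  rw [lift_eq_bind, bind_bind, lift_eq_bind 0 (F.bind θ), bind_bind]
  congr 1
  funext n
  simp [STerm.bind, up, scons, STerm.lift_eq_bind 0 (θ n)]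

end SFormula

namespace CSemiring

variable {A : Type*} (S : CSemiring A)

theorem le_refl (a : A) : S.le a a := S.add_idem a

theorem le_trans {a b c : A} (hab : S.le a b) (hbc : S.le b c) : S.le a c := by
  unfold CSemiring.le at *
  rw [← hbc, ← S.add_assoc, hab]

theorem mul_le_mul {a b c d : A} (hab : S.le a b) (hcd : S.le c d) :
    S.le (S.mul a c) (S.mul b d) := by
  unfold CSemiring.le at *
  have hc : S.add (S.mul a c) (S.mul b c) = S.mul b c := by
    rw [S.mul_comm a c, S.mul_comm b c, ← S.mul_add, hab]
  have hb : S.add (S.mul b c) (S.mul b d) = S.mul b d := by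
    rw [← S.mul_add, hcd]
  rw [← hb, ← S.add_assoc, hc]

theorem prod_cons (a : A) (l : List A) : S.prod (a :: l) = S.mul a (S.prod l) := rfl

theorem prod_singleton (a : A) : S.prod [a] = a := S.mul_unit a

theorem prod_append (l₁ l₂ : List A) :
    S.prod (l₁ ++ l₂) = S.mul (S.prod l₁) (S.prod l₂) := by
  induction l₁ with
  | nil => rw [List.nil_append, S.mul_comm]; exact (S.mul_unit _).symm
  | cons a l ih => rw [List.cons_append, prod_cons, prod_cons, ih, S.mul_assoc]

end CSemiring

namespace SELLS

variable {A : Type} {S : CSemiring A} {Fn Pr : ℕ → Type}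

open Set
open STerm (scons)

def bangs (L : List (A × SFormula A Fn Pr)) : Multiset (SFormula A Fn Pr) :=
  ↑(L.map fun p => SFormula.bang p.1 p.2)

@[simp]
theorem bangs_nil : bangs ([] : List (A × SFormula A Fn Pr)) = 0 := rfl

@[simp]
theorem bangs_cons (p : A × SFormula A Fn Pr) (L : List (A × SFormula A Fn Pr)) :
    bangs (p :: L) = .bang p.1 p.2 ::ₘ bangs L := rfl

theorem bangs_append (L₁ L₂ : List (A × SFormula A Fn Pr)) :
    bangs (L₁ ++ L₂) = bangs L₁ + bangs L₂ := by
  simp [bangs]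

theorem map_bind_bangs (θ : ℕ → STerm Fn) (L : List (A × SFormula A Fn Pr)) :
    (bangs L).map (SFormula.bind θ) = bangs (L.map fun p => (p.1, p.2.bind θ)) := by
  rw [bangs, bangs, Multiset.map_coe, List.map_map, List.map_map]
  rfl

theorem map_bind_map_lift_zero (θ : ℕ → STerm Fn) (Γ : Multiset (SFormula A Fn Pr)) :
    (Γ.map (SFormula.lift 0)).map (SFormula.bind (STerm.up θ))
      = (Γ.map (SFormula.bind θ)).map (SFormula.lift 0) := by
  simp only [Multiset.map_map, Function.comp_def, SFormula.lift_zero_bind_up]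

theorem bind {c : Bool} {Γ : Multiset (SFormula A Fn Pr)} {G : SFormula A Fn Pr}
    (h : SELLS S Fn Pr c Γ G) (θ : ℕ → STerm Fn) :
    SELLS S Fn Pr c (Γ.map (SFormula.bind θ)) (G.bind θ) := by
  induction h generalizing θ with
  | init c p ts => exact init c p _
  | oneR c => exact oneR c
  | topR c Γ => exact topR c _
  | withR _ _ ih₁ ih₂ => exact withR (ih₁ θ) (ih₂ θ)
  | exR t _ ih => exact exR (t.bind θ) (by simpa only [SFormula.bind_subst_zero] using ih θ)
  | allR _ ih => exact allR (by simpa only [map_bind_map_lift_zero] using ih (STerm.up θ))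
  | exL _ ih =>
    have h := ih (STerm.up θ)
    rw [Multiset.map_cons, map_bind_map_lift_zero, SFormula.lift_zero_bind_up] at h
    rw [Multiset.map_cons]
    exact exL h
  | allL t _ ih =>
    simp only [Multiset.map_cons, SFormula.bind_subst_zero] at ih ⊢
    exact allL (t.bind θ) (ih θ)
  | prom L hle _ ih =>
    have hL := ih θ
    change SELLS S Fn Pr _ ((bangs L).map _) _ at hL ⊢
    rw [map_bind_bangs] at hL ⊢
    exact prom _ (by simpa [Function.comp_def] using hle) hL
  | oneL _ ih => rw [Multiset.map_cons]; exact oneL (ih θ)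
  | weak _ ih => rw [Multiset.map_cons]; exact weak (ih θ)
  | tensorL _ ih => simp only [Multiset.map_cons] at ih ⊢; exact tensorL (ih θ)
  | withL1 _ ih => simp only [Multiset.map_cons] at ih ⊢; exact withL1 (ih θ)
  | withL2 _ ih => simp only [Multiset.map_cons] at ih ⊢; exact withL2 (ih θ)
  | der _ ih => simp only [Multiset.map_cons] at ih ⊢; exact der (ih θ)
  | contr _ ih => simp only [Multiset.map_cons] at ih ⊢; exact contr (ih θ)
  | limpR _ ih => simp only [Multiset.map_cons] at ih; exact limpR (ih θ)
  | tensorR _ _ ih₁ ih₂ => rw [Multiset.map_add]; exact tensorR (ih₁ θ) (ih₂ θ)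
  | limpL _ _ ih₁ ih₂ =>
    simp only [Multiset.map_cons, Multiset.map_add] at ih₂ ⊢
    exact limpL (ih₁ θ) (ih₂ θ)
  | cut _ _ ih₁ ih₂ =>
    simp only [Multiset.map_cons, Multiset.map_add] at ih₂ ⊢
    exact cut (ih₁ θ) (ih₂ θ)

theorem weaken_bangs {c : Bool} {Δ : Multiset (SFormula A Fn Pr)} {G : SFormula A Fn Pr}
    (L : List (A × SFormula A Fn Pr)) (h : SELLS S Fn Pr c Δ G) :
    SELLS S Fn Pr c (bangs L + Δ) G := by
  induction L with
  | nil => simpa using h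
  | cons p L ih => simpa using weak ih

theorem contract_bangs {c : Bool} {G : SFormula A Fn Pr} (L : List (A × SFormula A Fn Pr))
    (Δ : Multiset (SFormula A Fn Pr)) (h : SELLS S Fn Pr c (bangs L + (bangs L + Δ)) G) :
    SELLS S Fn Pr c (bangs L + Δ) G := by
  induction L generalizing Δ with
  | nil => simpa using h
  | cons p L ih =>
    have h' := ih (.bang p.1 p.2 ::ₘ .bang p.1 p.2 ::ₘ Δ) (by
      simpa only [bangs_cons, Multiset.cons_add, Multiset.add_cons, Multiset.cons_swap] using h)
    simpa only [bangs_cons, Multiset.cons_add, Multiset.add_cons] using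
      contr (by simpa only [Multiset.add_cons] using h')

theorem map_bind_freshen {Γ : Multiset (SFormula A Fn Pr)} {x : ℕ}
    (hx : (Γ.map SFormula.bound).sup ≤ x) :
    Γ.map (SFormula.bind (STerm.freshen x)) = Γ.map (SFormula.lift 0) :=
  Multiset.map_congr rfl fun _ hK =>
    SFormula.bind_freshen ((Multiset.le_sup (Multiset.mem_map_of_mem _ hK)).trans hx)

theorem allR_of_forall {c : Bool} {Γ : Multiset (SFormula A Fn Pr)} {H : SFormula A Fn Pr}
    (h : ∀ t, SELLS S Fn Pr c Γ (H.subst 0 t)) : SELLS S Fn Pr c Γ (.all H) := by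
  set x := max H.bound (Γ.map SFormula.bound).sup
  have hfresh := (h (.var x)).bind (STerm.freshen x)
  rw [map_bind_freshen (le_max_right _ _),
    SFormula.subst_zero_var_bind_freshen (le_max_left _ _)] at hfresh
  exact allR hfresh

theorem exL_of_forall {c : Bool} {Δ : Multiset (SFormula A Fn Pr)} {H G : SFormula A Fn Pr}
    (h : ∀ t, SELLS S Fn Pr c (H.subst 0 t ::ₘ Δ) G) : SELLS S Fn Pr c (.ex H ::ₘ Δ) G := by
  set x := max (max H.bound G.bound) (Δ.map SFormula.bound).sup
  have hfresh := (h (.var x)).bind (STerm.freshen x)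
  rw [Multiset.map_cons, map_bind_freshen (le_max_right _ _),
    SFormula.subst_zero_var_bind_freshen ((le_max_left _ _).trans (le_max_left _ _)),
    SFormula.bind_freshen ((le_max_right _ _).trans (le_max_left _ _))] at hfresh
  exact exL hfresh

variable (S) in
/-- The closure operator of Okada's phase space for `SELLS`: the biorthogonal of `X` with
respect to the pole of cut-free provable sequents. -/
def closure (X : Set (Multiset (SFormula A Fn Pr))) : Set (Multiset (SFormula A Fn Pr)) :=
  {δ | ∀ Θ G, (∀ γ ∈ X, SELLS S Fn Pr false (γ + Θ) G) → SELLS S Fn Pr false (δ + Θ) G}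

variable (S) in
def IsFact (X : Set (Multiset (SFormula A Fn Pr))) : Prop := closure S X ⊆ X

theorem subset_closure (X : Set (Multiset (SFormula A Fn Pr))) : X ⊆ closure S X :=
  fun _ hγ _ _ h => h _ hγ

theorem closure_mono {X Y : Set (Multiset (SFormula A Fn Pr))} (h : X ⊆ Y) :
    closure S X ⊆ closure S Y :=
  fun _ hδ Θ G hY => hδ Θ G fun γ hγ => hY γ (h hγ)

theorem isFact_closure (X : Set (Multiset (SFormula A Fn Pr))) : IsFact S (closure S X) :=
  fun _ hδ Θ G hX => hδ Θ G fun _ hγ => hγ Θ G hX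

theorem isFact_univ : IsFact S (univ : Set (Multiset (SFormula A Fn Pr))) :=
  subset_univ _

theorem IsFact.closure_subset {X Y : Set (Multiset (SFormula A Fn Pr))} (hY : IsFact S Y)
    (h : X ⊆ Y) : closure S X ⊆ Y :=
  (closure_mono h).trans hY

theorem IsFact.inter {X Y : Set (Multiset (SFormula A Fn Pr))} (hX : IsFact S X)
    (hY : IsFact S Y) : IsFact S (X ∩ Y) :=
  subset_inter (hX.closure_subset inter_subset_left) (hY.closure_subset inter_subset_right)

theorem isFact_iInter {ι : Type*} {X : ι → Set (Multiset (SFormula A Fn Pr))}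
    (hX : ∀ i, IsFact S (X i)) : IsFact S (⋂ i, X i) :=
  subset_iInter fun i => (hX i).closure_subset (iInter_subset X i)

theorem IsFact.add_mem {X Y : Set (Multiset (SFormula A Fn Pr))} (hY : IsFact S Y)
    {δ Θ : Multiset (SFormula A Fn Pr)} (hδ : δ ∈ closure S X) (h : ∀ γ ∈ X, γ + Θ ∈ Y) :
    δ + Θ ∈ Y :=
  hY fun Θ' G hY' => by
    rw [add_assoc]
    exact hδ (Θ + Θ') G fun γ hγ => by rw [← add_assoc]; exact hY' _ (h γ hγ)

theorem IsFact.limp {X Y : Set (Multiset (SFormula A Fn Pr))} (hY : IsFact S Y) :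
    IsFact S {Γ | ∀ δ ∈ X, Γ + δ ∈ Y} :=
  fun _ hΓ _ hδ => hY.add_mem hΓ fun _ hγ => hγ _ hδ

theorem IsFact.mem_of_imp {Y : Set (Multiset (SFormula A Fn Pr))} (hY : IsFact S Y)
    {γ δ : Multiset (SFormula A Fn Pr)} (hγ : γ ∈ Y)
    (h : ∀ Θ G, SELLS S Fn Pr false (γ + Θ) G → SELLS S Fn Pr false (δ + Θ) G) : δ ∈ Y :=
  hY.closure_subset (singleton_subset_iff.2 hγ) fun Θ G hγ' => h Θ G (hγ' γ rfl)

theorem add_mem_closure_add {X₁ X₂ : Set (Multiset (SFormula A Fn Pr))}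
    {δ₁ δ₂ : Multiset (SFormula A Fn Pr)} (h₁ : δ₁ ∈ closure S X₁) (h₂ : δ₂ ∈ closure S X₂) :
    δ₁ + δ₂ ∈ closure S (X₁ + X₂) := by
  refine (isFact_closure _).add_mem h₁ fun γ₁ hγ₁ => ?_
  rw [add_comm γ₁]
  refine (isFact_closure _).add_mem h₂ fun γ₂ hγ₂ => ?_
  rw [add_comm γ₂]
  exact subset_closure _ (add_mem_add hγ₁ hγ₂)

theorem closure_subset_provable {X : Set (Multiset (SFormula A Fn Pr))} {G : SFormula A Fn Pr}
    (h : ∀ γ ∈ X, SELLS S Fn Pr false γ G) :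
    ∀ δ ∈ closure S X, SELLS S Fn Pr false δ G :=
  fun δ hδ => by simpa using hδ 0 G fun γ hγ => by simpa using h γ hγ

variable (S) in
def Promotable (a : A) : Set (Multiset (SFormula A Fn Pr)) :=
  {γ | ∃ L, γ = bangs L ∧ S.le a (S.prod (L.map Prod.fst))}

variable (S) in
def interp : SFormula A Fn Pr → (ℕ → STerm Fn) → Set (Multiset (SFormula A Fn Pr))
  | .atom p ts, σ => closure S {{(SFormula.atom p ts).bind σ}}
  | .one, _ => closure S {0}
  | .top, _ => univ
  | .tensor F G, σ => closure S (interp F σ + interp G σ)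
  | .limp F G, σ => {Γ | ∀ δ ∈ interp F σ, Γ + δ ∈ interp G σ}
  | .with_ F G, σ => interp F σ ∩ interp G σ
  | .ex F, σ => closure S (⋃ t, interp F (scons t σ))
  | .all F, σ => ⋂ t, interp F (scons t σ)
  | .bang a F, σ => closure S (interp F σ ∩ Promotable S a)

variable (S) in
def ctxInterp (σ : ℕ → STerm Fn) (Γ : Multiset (SFormula A Fn Pr)) :
    Set (Multiset (SFormula A Fn Pr)) :=
  (Γ.map fun F => interp S F σ).sum

theorem isFact_interp (F : SFormula A Fn Pr) (σ : ℕ → STerm Fn) : IsFact S (interp S F σ) := by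
  induction F generalizing σ with
  | top => exact isFact_univ
  | limp F G _ ihG => exact (ihG σ).limp
  | with_ F G ihF ihG => exact (ihF σ).inter (ihG σ)
  | all F ih => exact isFact_iInter fun t => ih (scons t σ)
  | _ => exact isFact_closure _

theorem interp_bind (F : SFormula A Fn Pr) (θ σ : ℕ → STerm Fn) :
    interp S (F.bind θ) σ = interp S F fun n => (θ n).bind σ := by
  induction F generalizing θ σ with
  | ex F ih | all F ih => simp only [SFormula.bind, interp, ih, STerm.up_bind_scons]
  | _ => simp [SFormula.bind, interp, STerm.bind_bind, *]

theorem interp_subst_zero (F : SFormula A Fn Pr) (t : STerm Fn) (σ : ℕ → STerm Fn) :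
    interp S (F.subst 0 t) σ = interp S F (scons (t.bind σ) σ) := by
  rw [SFormula.subst_zero_eq_bind, interp_bind]
  congr 1
  funext n
  cases n <;> rfl

theorem interp_lift_zero (F : SFormula A Fn Pr) (t : STerm Fn) (σ : ℕ → STerm Fn) :
    interp S (F.lift 0) (scons t σ) = interp S F σ := by
  rw [SFormula.lift_eq_bind, interp_bind]
  simp [STerm.bind, scons]

@[simp]
theorem ctxInterp_cons (σ : ℕ → STerm Fn) (F : SFormula A Fn Pr)
    (Γ : Multiset (SFormula A Fn Pr)) :
    ctxInterp S σ (F ::ₘ Γ) = interp S F σ + ctxInterp S σ Γ := by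
  simp [ctxInterp]

@[simp]
theorem ctxInterp_add (σ : ℕ → STerm Fn) (Γ Δ : Multiset (SFormula A Fn Pr)) :
    ctxInterp S σ (Γ + Δ) = ctxInterp S σ Γ + ctxInterp S σ Δ := by
  simp [ctxInterp]

theorem add_mem_ctxInterp_cons {σ : ℕ → STerm Fn} {F : SFormula A Fn Pr}
    {Γ d δ : Multiset (SFormula A Fn Pr)} (hd : d ∈ interp S F σ) (hδ : δ ∈ ctxInterp S σ Γ) :
    d + δ ∈ ctxInterp S σ (F ::ₘ Γ) := by
  rw [ctxInterp_cons]
  exact add_mem_add hd hδ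

theorem ctxInterp_singleton (σ : ℕ → STerm Fn) (F : SFormula A Fn Pr) :
    ctxInterp S σ {F} = interp S F σ := by
  simp [ctxInterp]

theorem ctxInterp_map_lift_zero (t : STerm Fn) (σ : ℕ → STerm Fn)
    (Γ : Multiset (SFormula A Fn Pr)) :
    ctxInterp S (scons t σ) (Γ.map (SFormula.lift 0)) = ctxInterp S σ Γ := by
  simp [ctxInterp, interp_lift_zero]

theorem add_mem_promotable {a b : A} {γ₁ γ₂ : Multiset (SFormula A Fn Pr)}
    (h₁ : γ₁ ∈ Promotable S a) (h₂ : γ₂ ∈ Promotable S b) :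
    γ₁ + γ₂ ∈ Promotable S (S.mul a b) := by
  obtain ⟨L₁, rfl, hL₁⟩ := h₁
  obtain ⟨L₂, rfl, hL₂⟩ := h₂
  exact ⟨L₁ ++ L₂, (bangs_append L₁ L₂).symm, by
    simpa only [List.map_append, S.prod_append] using S.mul_le_mul hL₁ hL₂⟩

theorem mem_closure_promotable (σ : ℕ → STerm Fn) (L : List (A × SFormula A Fn Pr))
    {δ : Multiset (SFormula A Fn Pr)} (hδ : δ ∈ ctxInterp S σ (bangs L)) :
    δ ∈ closure S (Promotable S (S.prod (L.map Prod.fst)) ∩ ctxInterp S σ (bangs L)) := by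
  induction L generalizing δ with
  | nil =>
    obtain rfl : δ = 0 := hδ
    exact subset_closure _ ⟨⟨[], rfl, S.le_refl _⟩, rfl⟩
  | cons p L ih =>
    rw [bangs_cons, ctxInterp_cons] at hδ ⊢
    obtain ⟨d, hd, δ', hδ', rfl⟩ := hδ
    refine closure_mono ?_ (add_mem_closure_add hd (ih hδ'))
    rintro _ ⟨γ₁, ⟨hγ₁, hγ₁p⟩, γ₂, ⟨hγ₂p, hγ₂⟩, rfl⟩
    exact ⟨add_mem_promotable hγ₁p hγ₂p, add_mem_add (subset_closure _ ⟨hγ₁, hγ₁p⟩) hγ₂⟩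

variable (S) in
def Valid (Γ : Multiset (SFormula A Fn Pr)) (G : SFormula A Fn Pr) : Prop :=
  ∀ σ, ctxInterp S σ Γ ⊆ interp S G σ

namespace Valid

variable {Γ Δ : Multiset (SFormula A Fn Pr)} {F H G : SFormula A Fn Pr}

theorem init {n : ℕ} (p : Pr n) (ts : Fin n → STerm Fn) :
    Valid S {SFormula.atom p ts} (SFormula.atom p ts) :=
  fun σ => (ctxInterp_singleton σ _).subset

theorem oneR : Valid S (0 : Multiset (SFormula A Fn Pr)) .one :=
  fun _ => subset_closure _

theorem oneL (h : Valid S Γ G) : Valid S (.one ::ₘ Γ) G := by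
  intro σ
  rw [ctxInterp_cons]
  rintro _ ⟨d, hd, δ, hδ, rfl⟩
  exact (isFact_interp G σ).add_mem hd fun γ (hγ : γ = 0) => by simpa [hγ] using h σ hδ

theorem tensorR (h₁ : Valid S Γ F) (h₂ : Valid S Δ H) : Valid S (Γ + Δ) (.tensor F H) := by
  intro σ
  rw [ctxInterp_add]
  rintro _ ⟨δ₁, hδ₁, δ₂, hδ₂, rfl⟩
  exact subset_closure _ (add_mem_add (h₁ σ hδ₁) (h₂ σ hδ₂))

theorem tensorL (h : Valid S (F ::ₘ H ::ₘ Γ) G) : Valid S (.tensor F H ::ₘ Γ) G := by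
  intro σ
  rw [ctxInterp_cons]
  rintro _ ⟨d, hd, δ, hδ, rfl⟩
  refine (isFact_interp G σ).add_mem hd ?_
  rintro _ ⟨γ₁, hγ₁, γ₂, hγ₂, rfl⟩
  simpa only [add_assoc] using h σ (add_mem_ctxInterp_cons hγ₁ (add_mem_ctxInterp_cons hγ₂ hδ))

theorem limpR (h : Valid S (F ::ₘ Γ) H) : Valid S Γ (.limp F H) :=
  fun σ δ hδ γ hγ => by simpa only [add_comm γ] using h σ (add_mem_ctxInterp_cons hγ hδ)

theorem limpL (h₁ : Valid S Γ F) (h₂ : Valid S (H ::ₘ Δ) G) :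
    Valid S (.limp F H ::ₘ (Γ + Δ)) G := by
  intro σ
  rw [ctxInterp_cons, ctxInterp_add]
  rintro _ ⟨d, hd, _, ⟨δ₁, hδ₁, δ₂, hδ₂, rfl⟩, rfl⟩
  simpa only [add_assoc] using h₂ σ (add_mem_ctxInterp_cons (hd δ₁ (h₁ σ hδ₁)) hδ₂)

theorem withR (h₁ : Valid S Γ F) (h₂ : Valid S Γ H) : Valid S Γ (.with_ F H) :=
  fun σ _ hδ => ⟨h₁ σ hδ, h₂ σ hδ⟩

theorem withL1 (h : Valid S (F ::ₘ Γ) G) : Valid S (.with_ F H ::ₘ Γ) G := by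
  intro σ
  rw [ctxInterp_cons]
  rintro _ ⟨d, hd, δ, hδ, rfl⟩
  exact h σ (add_mem_ctxInterp_cons hd.1 hδ)

theorem withL2 (h : Valid S (H ::ₘ Γ) G) : Valid S (.with_ F H ::ₘ Γ) G := by
  intro σ
  rw [ctxInterp_cons]
  rintro _ ⟨d, hd, δ, hδ, rfl⟩
  exact h σ (add_mem_ctxInterp_cons hd.2 hδ)

theorem topR (Γ : Multiset (SFormula A Fn Pr)) : Valid S Γ .top :=
  fun _ => subset_univ _

theorem exR (t : STerm Fn) (h : Valid S Γ (F.subst 0 t)) : Valid S Γ (.ex F) := by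
  intro σ δ hδ
  have := h σ hδ
  rw [interp_subst_zero] at this
  exact subset_closure _ (mem_iUnion_of_mem _ this)

theorem exL (h : Valid S (F ::ₘ Γ.map (SFormula.lift 0)) (G.lift 0)) :
    Valid S (.ex F ::ₘ Γ) G := by
  intro σ
  rw [ctxInterp_cons]
  rintro _ ⟨d, hd, δ, hδ, rfl⟩
  refine (isFact_interp G σ).add_mem hd fun γ hγ => ?_
  obtain ⟨t, hγ⟩ := mem_iUnion.1 hγ
  rw [← interp_lift_zero G t]
  exact h (scons t σ) (add_mem_ctxInterp_cons hγ (by rwa [ctxInterp_map_lift_zero]))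

theorem allL (t : STerm Fn) (h : Valid S (F.subst 0 t ::ₘ Γ) G) : Valid S (.all F ::ₘ Γ) G := by
  intro σ
  rw [ctxInterp_cons]
  rintro _ ⟨d, hd, δ, hδ, rfl⟩
  have hdt := mem_iInter.1 hd (t.bind σ)
  rw [← interp_subst_zero] at hdt
  exact h σ (add_mem_ctxInterp_cons hdt hδ)

theorem allR (h : Valid S (Γ.map (SFormula.lift 0)) F) : Valid S Γ (.all F) :=
  fun σ _ hδ => mem_iInter.2 fun t => h (scons t σ) (by rwa [ctxInterp_map_lift_zero])

theorem der {a : A} (h : Valid S (F ::ₘ Γ) G) : Valid S (.bang a F ::ₘ Γ) G := by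
  intro σ
  rw [ctxInterp_cons]
  rintro _ ⟨d, hd, δ, hδ, rfl⟩
  exact (isFact_interp G σ).add_mem hd fun _ hγ => h σ (add_mem_ctxInterp_cons hγ.1 hδ)

theorem weak {a : A} (h : Valid S Γ G) : Valid S (.bang a F ::ₘ Γ) G := by
  intro σ
  rw [ctxInterp_cons]
  rintro _ ⟨d, hd, δ, hδ, rfl⟩
  refine (isFact_interp G σ).add_mem hd ?_
  rintro _ ⟨-, L, rfl, -⟩
  exact (isFact_interp G σ).mem_of_imp (h σ hδ) fun Θ _ hΘ => by
    simpa only [add_assoc] using weaken_bangs L hΘ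

theorem contr {a : A} (h : Valid S (.bang a F ::ₘ .bang a F ::ₘ Γ) G) :
    Valid S (.bang a F ::ₘ Γ) G := by
  intro σ
  rw [ctxInterp_cons]
  rintro _ ⟨d, hd, δ, hδ, rfl⟩
  refine (isFact_interp G σ).add_mem hd ?_
  rintro γ hγ
  have hγγ := h σ (add_mem_ctxInterp_cons (subset_closure _ hγ)
    (add_mem_ctxInterp_cons (subset_closure _ hγ) hδ))
  obtain ⟨L, rfl, -⟩ := hγ.2
  exact (isFact_interp G σ).mem_of_imp hγγ fun Θ _ hΘ => by
    simpa only [add_assoc] using contract_bangs L (δ + Θ) (by simpa only [add_assoc] using hΘ)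

theorem prom (L : List (A × SFormula A Fn Pr)) {a : A} (hle : S.le a (S.prod (L.map Prod.fst)))
    (h : Valid S (bangs L) F) : Valid S (bangs L) (.bang a F) := by
  intro σ δ hδ
  refine closure_mono ?_ (mem_closure_promotable σ L hδ)
  rintro _ ⟨⟨L', rfl, hL'⟩, hγ⟩
  exact ⟨h σ hγ, L', rfl, S.le_trans hle hL'⟩

theorem cut (h₁ : Valid S Γ F) (h₂ : Valid S (F ::ₘ Δ) G) : Valid S (Γ + Δ) G := by
  intro σ
  rw [ctxInterp_add]
  rintro _ ⟨δ₁, hδ₁, δ₂, hδ₂, rfl⟩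
  exact h₂ σ (add_mem_ctxInterp_cons (h₁ σ hδ₁) hδ₂)

end Valid

theorem valid {c : Bool} {Γ : Multiset (SFormula A Fn Pr)} {G : SFormula A Fn Pr}
    (h : SELLS S Fn Pr c Γ G) : Valid S Γ G := by
  induction h with
  | init _ p ts => exact .init p ts
  | oneR => exact .oneR
  | oneL _ ih => exact ih.oneL
  | tensorR _ _ ih₁ ih₂ => exact ih₁.tensorR ih₂
  | tensorL _ ih => exact ih.tensorL
  | limpR _ ih => exact ih.limpR
  | limpL _ _ ih₁ ih₂ => exact ih₁.limpL ih₂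
  | withR _ _ ih₁ ih₂ => exact ih₁.withR ih₂
  | withL1 _ ih => exact ih.withL1
  | withL2 _ ih => exact ih.withL2
  | topR _ Γ => exact .topR Γ
  | exR t _ ih => exact .exR t ih
  | exL _ ih => exact ih.exL
  | allL t _ ih => exact .allL t ih
  | allR _ ih => exact ih.allR
  | der _ ih => exact ih.der
  | weak _ ih => exact ih.weak
  | contr _ ih => exact ih.contr
  | prom L hle _ ih => exact .prom L hle ih
  | cut _ _ ih₁ ih₂ => exact ih₁.cut ih₂

variable (S) in
def Adequate (F : SFormula A Fn Pr) (σ : ℕ → STerm Fn) : Prop :=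
  {F.bind σ} ∈ interp S F σ ∧ ∀ Γ ∈ interp S F σ, SELLS S Fn Pr false Γ (F.bind σ)

section

variable {F H : SFormula A Fn Pr} {σ : ℕ → STerm Fn}

theorem adequate_atom {n : ℕ} (p : Pr n) (ts : Fin n → STerm Fn) :
    Adequate S (.atom p ts) σ :=
  ⟨subset_closure _ rfl, closure_subset_provable fun _ hγ => hγ ▸ init false p _⟩

theorem adequate_one : Adequate S (.one : SFormula A Fn Pr) σ := by
  refine ⟨fun Θ G h => ?_, closure_subset_provable fun _ hγ => hγ ▸ oneR false⟩
  rw [Multiset.singleton_add]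
  exact oneL (by simpa using h 0 rfl)

theorem adequate_top : Adequate S (.top : SFormula A Fn Pr) σ :=
  ⟨mem_univ _, fun Γ _ => topR false Γ⟩

theorem Adequate.tensor (hF : Adequate S F σ) (hH : Adequate S H σ) :
    Adequate S (.tensor F H) σ := by
  refine ⟨fun Θ G h => ?_, closure_subset_provable ?_⟩
  · have := h _ (add_mem_add hF.1 hH.1)
    simp only [Multiset.singleton_add, Multiset.cons_add] at this ⊢
    exact tensorL this
  · rintro _ ⟨γ₁, hγ₁, γ₂, hγ₂, rfl⟩
    exact tensorR (hF.2 γ₁ hγ₁) (hH.2 γ₂ hγ₂)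

theorem Adequate.limp (hF : Adequate S F σ) (hH : Adequate S H σ) :
    Adequate S (.limp F H) σ := by
  refine ⟨fun γ hγ => (isFact_interp H σ).mem_of_imp hH.1 fun Θ G h => ?_, fun Γ hΓ => ?_⟩
  · rw [Multiset.singleton_add] at h
    rw [add_assoc, Multiset.singleton_add]
    exact limpL (hF.2 γ hγ) h
  · have := hH.2 _ (hΓ _ hF.1)
    rw [add_comm, Multiset.singleton_add] at this
    exact limpR this

theorem Adequate.with_ (hF : Adequate S F σ) (hH : Adequate S H σ) :
    Adequate S (.with_ F H) σ := by
  refine ⟨⟨(isFact_interp F σ).mem_of_imp hF.1 fun Θ G h => ?_,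
    (isFact_interp H σ).mem_of_imp hH.1 fun Θ G h => ?_⟩,
    fun Γ hΓ => withR (hF.2 Γ hΓ.1) (hH.2 Γ hΓ.2)⟩
  · rw [Multiset.singleton_add] at h ⊢
    exact withL1 h
  · rw [Multiset.singleton_add] at h ⊢
    exact withL2 h

theorem adequate_ex (h : ∀ t, Adequate S F (scons t σ)) : Adequate S (.ex F) σ := by
  refine ⟨fun Θ G hX => ?_, closure_subset_provable fun γ hγ => ?_⟩
  · rw [Multiset.singleton_add]
    refine exL_of_forall fun t => ?_
    rw [SFormula.subst_zero_bind_up, ← Multiset.singleton_add]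
    exact hX _ (mem_iUnion_of_mem t (h t).1)
  · obtain ⟨t, hγ⟩ := mem_iUnion.1 hγ
    refine exR t ?_
    rw [SFormula.subst_zero_bind_up]
    exact (h t).2 γ hγ

theorem adequate_all (h : ∀ t, Adequate S F (scons t σ)) : Adequate S (.all F) σ := by
  refine ⟨mem_iInter.2 fun t => (isFact_interp F _).mem_of_imp (h t).1 fun Θ G hΘ => ?_,
    fun Γ hΓ => allR_of_forall fun t => ?_⟩
  · rw [Multiset.singleton_add] at hΘ ⊢
    exact allL t (by rwa [SFormula.subst_zero_bind_up])
  · rw [SFormula.subst_zero_bind_up]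
    exact (h t).2 Γ (mem_iInter.1 hΓ t)

theorem Adequate.bang (a : A) (hF : Adequate S F σ) : Adequate S (.bang a F) σ := by
  refine ⟨fun Θ G hX => hX _ ⟨?_, [(a, F.bind σ)], rfl, ?_⟩, closure_subset_provable ?_⟩
  · refine (isFact_interp F σ).mem_of_imp hF.1 fun Θ G h => ?_
    rw [Multiset.singleton_add] at h ⊢
    exact der h
  · simpa only [List.map_cons, List.map_nil, S.prod_singleton] using S.le_refl a
  · rintro _ ⟨hγ, L, rfl, hL⟩
    exact prom L hL (hF.2 _ hγ)

end

theorem adequate (F : SFormula A Fn Pr) (σ : ℕ → STerm Fn) : Adequate S F σ := by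
  induction F generalizing σ with
  | atom p ts => exact adequate_atom p ts
  | one => exact adequate_one
  | top => exact adequate_top
  | tensor F H ihF ihH => exact (ihF σ).tensor (ihH σ)
  | limp F H ihF ihH => exact (ihF σ).limp (ihH σ)
  | with_ F H ihF ihH => exact (ihF σ).with_ (ihH σ)
  | ex F ih => exact adequate_ex fun t => ih (scons t σ)
  | all F ih => exact adequate_all fun t => ih (scons t σ)
  | bang a F ih => exact (ih σ).bang a

theorem mem_ctxInterp_var_self (Γ : Multiset (SFormula A Fn Pr)) :
    Γ ∈ ctxInterp S STerm.var Γ := by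
  induction Γ using Multiset.induction with
  | empty => rfl
  | cons F Γ ih =>
    have hF := (adequate (S := S) F .var).1
    rw [SFormula.bind_var] at hF
    rw [← Multiset.singleton_add]
    exact add_mem_ctxInterp_cons hF ih

end SELLS

/-- Cut-elimination for SELLS: every sequent provable in
`SELLS_Σ` with the cut rule is provable without it. -/
theorem sells_cut_elimination {A : Type} (S : CSemiring A) (Fn Pr : ℕ → Type)
    (Γ : Multiset (SFormula A Fn Pr)) (G : SFormula A Fn Pr)
    (h : SELLS S Fn Pr true Γ G) : SELLS S Fn Pr false Γ G := by
  have hΓ := h.valid STerm.var (SELLS.mem_ctxInterp_var_self Γ)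
  simpa only [SFormula.bind_var] using (SELLS.adequate G STerm.var).2 Γ hΓ
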